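/- arXiv:1701.06969 — 6 statements merged into one kernel-verified Lean document; each statement's English description precedes it below -/
import Mathlib

section
/- Let C be an (n,k,l) array code over a finite field F (a subset of (F^l)^n of size |F|^{kl}) that can correct up to t errors by downloading an α-fraction, i.e., there exist functions f_i : F^l → F^{α_i l} with Σα_i ≤ αn and g with g(f_1(C_1+E_1),...,f_n(C_n+E_n)) = C for all codewords C and error matrices E of column-weight ≤ t. Then for every subset I ⊆ {1,...,n} with |I| = n - 2t, we have Σ_{i∈I} α_i ≥ k. -/
/-- If an `(n,k,l)` array code over a finite field `F` (a set of `|F|^(k*l)` codewords in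
`(F^l)^n`) corrects `t` errors by fractional downloading — i.e. there are functions
`f i : F^l → F^(a i)` (so `α_i = a i / l`) with `∑ α_i ≤ α n` and a decoder `g` with
`g (f 1 (C_1+E_1), …, f n (C_n+E_n)) = C` for every codeword `C` and error `E` of
column-weight ≤ `t` — then for every `I ⊆ {1,…,n}` with `|I| = n - 2t` we have
`∑_{i ∈ I} α_i ≥ k`, i.e. `∑_{i ∈ I} a i ≥ k*l`. -/
theorem fractional_decoding_download_lower_bound
    {F : Type*} [Field F] [Fintype F] [DecidableEq F]
    {n k l t : ℕ} (hl : 0 < l) (h2t : 2 * t ≤ n)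
    (𝒞 : Finset (Fin n → Fin l → F))
    (hcard : 𝒞.card = Fintype.card F ^ (k * l))
    (a : Fin n → ℕ) (α : ℚ) (hα : (∑ i : Fin n, (a i : ℚ) / l) ≤ α * n)
    (f : (i : Fin n) → (Fin l → F) → (Fin (a i) → F))
    (g : ((i : Fin n) → Fin (a i) → F) → (Fin n → Fin l → F))
    (hdec : ∀ C ∈ 𝒞, ∀ E : Fin n → Fin l → F,
      (Finset.univ.filter fun i => E i ≠ 0).card ≤ t →
      g (fun i => f i (C i + E i)) = C) :
    ∀ I : Finset (Fin n), I.card = n - 2 * t → k * l ≤ ∑ i ∈ I, a i := by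
  intro I hI
  -- complement has 2t elements
  have hIc : Iᶜ.card = 2 * t := by
    have := Finset.card_compl I
    rw [hI] at this
    simp only [Fintype.card_fin] at this
    omega
  obtain ⟨A, hAsub, hAcard⟩ : ∃ A ⊆ Iᶜ, A.card = t :=
    Finset.exists_subset_card_eq (by omega)
  set B : Finset (Fin n) := Iᶜ \ A with hB
  have hBcard : B.card = t := by
    rw [hB, Finset.card_sdiff_of_subset hAsub, hIc, hAcard]; omega
  -- injectivity of the download map on I
  have hinj : ∀ C ∈ 𝒞, ∀ C' ∈ 𝒞,
      (∀ i ∈ I, f i (C i) = f i (C' i)) → C = C' := by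
    intro C hC C' hC' hff
    set E : Fin n → Fin l → F := fun i => if i ∈ A then C' i - C i else 0 with hE
    set E' : Fin n → Fin l → F := fun i => if i ∈ B then C i - C' i else 0 with hE'
    have hwE : (Finset.univ.filter fun i => E i ≠ 0).card ≤ t := by
      rw [← hAcard]
      apply Finset.card_le_card
      intro i hi
      simp only [Finset.mem_filter, hE] at hi
      by_contra h
      exact hi.2 (by simp [h])
    have hwE' : (Finset.univ.filter fun i => E' i ≠ 0).card ≤ t := by
      rw [← hBcard]
      apply Finset.card_le_card
      intro i hi
      simp only [Finset.mem_filter, hE'] at hi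
      by_contra h
      exact hi.2 (by simp [h])
    have hkey : (fun i => f i (C i + E i)) = (fun i => f i (C' i + E' i)) := by
      funext i
      by_cases hiA : i ∈ A
      · have hiB : i ∉ B := by simp [hB, hiA]
        simp [hE, hE', hiA, hiB]
      · by_cases hiB : i ∈ B
        · simp [hE, hE', hiA, hiB]
        · have hiI : i ∈ I := by
            by_contra h
            exact hiB (by simp [hB, hiA, h])
          simp [hE, hE', hiA, hiB, hff i hiI]
    have h1 := hdec C hC E hwE
    have h2 := hdec C' hC' E' hwE'
    rw [hkey] at h1
    rw [h1] at h2
    exact h2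
  -- cardinality bound via injection into the download symbols on I
  have hle : 𝒞.card ≤ Fintype.card ((i : I) → Fin (a i) → F) := by
    rw [← Finset.card_univ]
    apply Finset.card_le_card_of_injOn (fun C => fun i : I => f i (C i))
      (fun _ _ => Finset.mem_univ _)
    intro C hC C' hC' h
    exact hinj C hC C' hC' (fun i hi => congrFun h ⟨i, hi⟩)
  have hcount : Fintype.card ((i : I) → Fin (a i) → F)
      = Fintype.card F ^ (∑ i ∈ I, a i) := by
    rw [Fintype.card_pi]
    have : ∀ i : I, Fintype.card (Fin (a i) → F) = Fintype.card F ^ (a i) := by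
      intro i; simp [Fintype.card_fun]
    rw [Finset.prod_congr rfl (fun i _ => this i)]
    rw [Finset.prod_pow_eq_pow_sum]
    congr 1
    exact Finset.sum_attach I a
  rw [hcard, hcount] at hle
  have hF : 1 < Fintype.card F := Fintype.one_lt_card
  exact (Nat.pow_le_pow_iff_right hF).mp hle
end

section
/- For any code length n, dimension k, and α with k/n ≤ α ≤ 1 such that αn is an integer, the α-decoding radius satisfies r_α(n,k) ≤ ⌊(n - k/α)/2⌋. Equivalently, if an (n,k,l) array code can correct t errors by downloading an αnl-symbol fraction as in the definition, then k/(n-2t) ≤ α, i.e., t ≤ (n - k/α)/2. -/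
open Finset

/-- Double counting: each `i` lies in `choose (n-1) (s-1)` of the `s`-subsets. -/
lemma count_filter_mem {n s : ℕ} (hs : 0 < s) (i : Fin n) :
    (((Finset.univ : Finset (Fin n)).powersetCard s).filter (fun S => i ∈ S)).card
      = (n - 1).choose (s - 1) := by
  have key : (((Finset.univ : Finset (Fin n)).powersetCard s).filter (fun S => i ∈ S)).card
      = (((Finset.univ : Finset (Fin n)).erase i).powersetCard (s - 1)).card := by
    refine Finset.card_bij' (fun S _ => S.erase i) (fun T _ => insert i T) ?_ ?_ ?_ ?_
    · intro S hS
      simp only [mem_filter, mem_powersetCard] at hS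
      simp only [mem_powersetCard]
      refine ⟨fun x hx => Finset.mem_erase.2 ⟨(Finset.mem_erase.1 hx).1, Finset.mem_univ x⟩, ?_⟩
      rw [Finset.card_erase_of_mem hS.2, hS.1.2]
    · intro T hT
      simp only [mem_powersetCard] at hT
      have hiT : i ∉ T := fun h => (Finset.mem_erase.1 (hT.1 h)).1 rfl
      simp only [mem_filter, mem_powersetCard]
      refine ⟨⟨fun x _ => Finset.mem_univ x, ?_⟩, Finset.mem_insert_self i T⟩
      rw [Finset.card_insert_of_notMem hiT, hT.2, Nat.sub_add_cancel hs]
    · intro S hS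
      simp only [mem_filter] at hS
      exact Finset.insert_erase hS.2
    · intro T hT
      simp only [mem_powersetCard] at hT
      have hiT : i ∉ T := fun h => (Finset.mem_erase.1 (hT.1 h)).1 rfl
      exact Finset.erase_insert hiT
  rw [key, Finset.card_powersetCard, Finset.card_erase_of_mem (Finset.mem_univ i),
    Finset.card_univ, Fintype.card_fin]

lemma sum_powersetCard_sum {n s : ℕ} (hs : 0 < s) (a : Fin n → ℕ) :
    ∑ S ∈ (Finset.univ : Finset (Fin n)).powersetCard s, ∑ i ∈ S, a i
      = (n - 1).choose (s - 1) * ∑ i, a i := by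
  have h1 : ∀ S ∈ (Finset.univ : Finset (Fin n)).powersetCard s,
      ∑ i ∈ S, a i = ∑ i : Fin n, if i ∈ S then a i else 0 := by
    intro S _
    rw [Finset.sum_ite_mem, Finset.univ_inter]
  rw [Finset.sum_congr rfl h1, Finset.sum_comm, Finset.mul_sum]
  refine Finset.sum_congr rfl fun i _ => ?_
  rw [← Finset.sum_filter, Finset.sum_const, smul_eq_mul, count_filter_mem hs i, mul_comm]

/-- Upper bound on the α-decoding radius: if an `(n,k,l)` array code over a finite field
`F` (with `|𝒞| = |F|^(k*l)`) corrects up to `t` errors (with `2t < n`) by downloading an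
`α`-fraction of the codeword — functions `f i : F^l → F^(a i)` with `∑ i, a i / l ≤ α n`
and a decoder `g` recovering any codeword from any error of column-weight ≤ `t` — then
`k/(n - 2t) ≤ α`, i.e. `t ≤ (n - k/α)/2`, so `r_α(n,k) ≤ ⌊(n - k/α)/2⌋`. -/
theorem alpha_decoding_radius_upper_bound
    {F : Type*} [Field F] [Fintype F] [DecidableEq F]
    {n k l t : ℕ} (hl : 0 < l) (h2t : 2 * t < n)
    (𝒞 : Finset (Fin n → Fin l → F))
    (hcard : 𝒞.card = Fintype.card F ^ (k * l))
    (a : Fin n → ℕ) (α : ℚ) (hα : (∑ i : Fin n, (a i : ℚ) / l) ≤ α * n)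
    (f : (i : Fin n) → (Fin l → F) → (Fin (a i) → F))
    (g : ((i : Fin n) → Fin (a i) → F) → (Fin n → Fin l → F))
    (hdec : ∀ C ∈ 𝒞, ∀ E : Fin n → Fin l → F,
      (Finset.univ.filter fun i => E i ≠ 0).card ≤ t →
      g (fun i => f i (C i + E i)) = C) :
    (k : ℚ) / ((n : ℚ) - 2 * t) ≤ α := by
  set s := n - 2 * t with hsdef
  have hs : 0 < s := Nat.sub_pos_of_lt h2t
  -- Key injectivity: for every s-subset S, k*l ≤ ∑_{i∈S} a i.
  have key : ∀ S ∈ (Finset.univ : Finset (Fin n)).powersetCard s,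
      k * l ≤ ∑ i ∈ S, a i := by
    intro S hS
    rw [Finset.mem_powersetCard] at hS
    have hScompl : Sᶜ.card = 2 * t := by
      rw [Finset.card_compl, hS.2, Fintype.card_fin]
      omega
    obtain ⟨A, hAsub, hAcard⟩ := Finset.exists_subset_card_eq (s := Sᶜ) (n := t) (by omega)
    set B := Sᶜ \ A with hB
    have hBcard : B.card = t := by
      rw [hB, Finset.card_sdiff_of_subset hAsub, hScompl, hAcard]; omega
    have hinj : ∀ C ∈ 𝒞, ∀ C' ∈ 𝒞,
        (∀ i ∈ S, f i (C i) = f i (C' i)) → C = C' := by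
      intro C hC C' hC' hfe
      set Y : Fin n → Fin l → F := fun i => if i ∈ A then C' i else C i with hY
      set Y' : Fin n → Fin l → F := fun i => if i ∈ B then C i else C' i with hY'
      have hYC : g (fun i => f i (Y i)) = C := by
        have := hdec C hC (fun i => Y i - C i) ?_
        · simpa using this
        · refine le_trans (Finset.card_le_card ?_) hAcard.le
          intro i hi
          simp only [Finset.mem_filter, ne_eq] at hi
          by_contra hiA
          exact hi.2 (by simp [hY, hiA])
      have hYC' : g (fun i => f i (Y' i)) = C' := by
        have := hdec C' hC' (fun i => Y' i - C' i) ?_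
        · simpa using this
        · refine le_trans (Finset.card_le_card ?_) hBcard.le
          intro i hi
          simp only [Finset.mem_filter, ne_eq] at hi
          by_contra hiB
          exact hi.2 (by simp [hY', hiB])
      have heq : (fun i => f i (Y i)) = fun i => f i (Y' i) := by
        funext i
        by_cases hiA : i ∈ A
        · have hiB : i ∉ B := by simp [hB, hiA]
          simp [hY, hY', hiA, hiB]
        · by_cases hiB : i ∈ B
          · simp [hY, hY', hiA, hiB]
          · have hiS : i ∈ S := by
              by_contra hiS
              exact hiB (Finset.mem_sdiff.2 ⟨Finset.mem_compl.2 hiS, hiA⟩)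
            simp only [hY, hY', if_neg hiA, if_neg hiB]
            exact hfe i hiS
      rw [← hYC, ← hYC', heq]
    have hcard2 : 𝒞.card ≤ Fintype.card ((i : {x // x ∈ S}) → Fin (a i) → F) := by
      rw [← Finset.card_univ]
      apply Finset.card_le_card_of_injOn (fun C => fun i : {x // x ∈ S} => f i (C i))
        (fun _ _ => Finset.mem_univ _)
      intro C hC C' hC' h
      exact hinj C hC C' hC' fun i hi => congrFun h ⟨i, hi⟩
    have htarget : Fintype.card ((i : {x // x ∈ S}) → Fin (a i) → F)
        = Fintype.card F ^ ∑ i ∈ S, a i := by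
      rw [Fintype.card_pi]
      calc ∏ i : {x // x ∈ S}, Fintype.card (Fin (a i) → F)
          = ∏ i ∈ S.attach, Fintype.card F ^ a (i : Fin n) := by
            refine Finset.prod_congr rfl fun i _ => ?_
            rw [Fintype.card_fun, Fintype.card_fin]
        _ = ∏ i ∈ S, Fintype.card F ^ a i := Finset.prod_attach S fun j => Fintype.card F ^ a j
        _ = Fintype.card F ^ ∑ i ∈ S, a i := by rw [← Finset.prod_pow_eq_pow_sum]
    rw [hcard, htarget] at hcard2
    exact (Nat.pow_le_pow_iff_right Fintype.one_lt_card).1 hcard2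
  -- averaging over all s-subsets
  have havg : n.choose s * (k * l) ≤ (n - 1).choose (s - 1) * ∑ i, a i := by
    rw [← sum_powersetCard_sum hs a]
    calc n.choose s * (k * l)
        = ∑ _S ∈ (Finset.univ : Finset (Fin n)).powersetCard s, k * l := by
          rw [Finset.sum_const, smul_eq_mul, Finset.card_powersetCard, Finset.card_univ,
            Fintype.card_fin]
      _ ≤ _ := Finset.sum_le_sum key
  have h1 : n - 1 + 1 = n := by omega
  have h2 : s - 1 + 1 = s := by omega
  have hid : n * (n - 1).choose (s - 1) = n.choose s * s := by
    have := Nat.add_one_mul_choose_eq (n - 1) (s - 1)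
    rwa [h1, h2] at this
  have hcpos : 0 < (n - 1).choose (s - 1) := Nat.choose_pos (by omega)
  have hmain : n * (k * l) ≤ s * ∑ i, a i := by
    have h3 : n.choose s * (k * l) * s ≤ (n - 1).choose (s - 1) * (∑ i, a i) * s :=
      Nat.mul_le_mul_right s havg
    have h4 : (n - 1).choose (s - 1) * (n * (k * l)) ≤
        (n - 1).choose (s - 1) * (s * ∑ i, a i) := by
      calc (n - 1).choose (s - 1) * (n * (k * l))
          = n * (n - 1).choose (s - 1) * (k * l) := by ring
        _ = n.choose s * s * (k * l) := by rw [hid]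
        _ = n.choose s * (k * l) * s := by ring
        _ ≤ (n - 1).choose (s - 1) * (∑ i, a i) * s := h3
        _ = (n - 1).choose (s - 1) * (s * ∑ i, a i) := by ring
    exact Nat.le_of_mul_le_mul_left h4 hcpos
  -- pass to ℚ
  have hn : 0 < n := by omega
  have hlQ : (0 : ℚ) < l := by exact_mod_cast hl
  have hA : (∑ i, (a i : ℚ)) ≤ α * n * l := by
    have hsum : (∑ i : Fin n, (a i : ℚ) / l) = (∑ i, (a i : ℚ)) / l := by
      rw [Finset.sum_div]
    rw [hsum] at hα
    calc (∑ i, (a i : ℚ)) = (∑ i, (a i : ℚ)) / l * l := by field_simp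
      _ ≤ α * n * l := mul_le_mul_of_nonneg_right hα hlQ.le
  have hmainQ : (n : ℚ) * (k * l) ≤ s * ∑ i, (a i : ℚ) := by
    exact_mod_cast hmain
  have hsQ : (0 : ℚ) < (n : ℚ) - 2 * t := by
    have : ((2 * t : ℕ) : ℚ) < (n : ℚ) := by exact_mod_cast h2t
    push_cast at this
    linarith
  have hsQeq : ((s : ℕ) : ℚ) = (n : ℚ) - 2 * t := by
    rw [hsdef, Nat.cast_sub h2t.le]
    push_cast
    ring
  rw [div_le_iff₀ hsQ]
  have hnl : (0 : ℚ) < (n : ℚ) * l := by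
    have hnQ : (0 : ℚ) < n := by exact_mod_cast hn
    positivity
  have h5 : (n : ℚ) * (k * l) ≤ (s : ℚ) * (α * n * l) :=
    hmainQ.trans (mul_le_mul_of_nonneg_left hA (by positivity))
  have h6 : (k : ℚ) * ((n : ℚ) * l) ≤ α * ((n : ℚ) - 2 * t) * ((n : ℚ) * l) := by
    calc (k : ℚ) * ((n : ℚ) * l) = (n : ℚ) * (k * l) := by ring
      _ ≤ (s : ℚ) * (α * n * l) := h5
      _ = α * ((n : ℚ) - 2 * t) * ((n : ℚ) * l) := by rw [hsQeq]; ring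
  have := le_of_mul_le_mul_right h6 hnl
  linarith
end

section
/- With the setup of the RS fractional-decoding construction, the polynomials h_0,...,h_{l-1} (each of degree < k) are uniquely determined by the polynomials g_0,...,g_{m-1}: if h_0,...,h_{l-1} and h'_0,...,h'_{l-1} are two families of polynomials of degree < k over B such that for all j = 0,...,m-1, h_{l-m+j}·p_j^{l-m} + Σ_{u=0}^{l-m-1} h_u·p_j^u = h'_{l-m+j}·p_j^{l-m} + Σ_{u=0}^{l-m-1} h'_u·p_j^u, then h_u = h'_u for all u = 0,...,l-1. -/
/-
Write `f u = h u - h' u` and `p j = ∏_{ω ∈ A j} (X - ω)`. For each `j` the hypothesis reads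
`f (l-m+j) * p j ^ (l-m) + ∑_{u < l-m} f u * p j ^ u = 0`. If `f u = 0` for all `u < t < l - m`,
reducing this identity modulo `p j ^ (t+1)` shows `p j ∣ f t`. The `p j` are pairwise coprime
(the `A j` are disjoint) and their product has degree `k > deg (f t)`, so `f t = 0`. Once all
lower `f u` vanish, the identity leaves `f (l-m+j) * p j ^ (l-m) = 0`, hence `f (l-m+j) = 0`.
-/

open Polynomial Finset Function

theorem dvd_of_mul_pow_add_sum_mul_pow_eq_zero {R : Type*} [CommRing R] [IsDomain R]
    {p c : R} {f : ℕ → R} {n t : ℕ} (hp : p ≠ 0) (ht : t < n) (hlow : ∀ u < t, f u = 0)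
    (h : c * p ^ n + ∑ u ∈ range n, f u * p ^ u = 0) : p ∣ f t := by
  have hsplit : ∑ u ∈ range n, f u * p ^ u = f t * p ^ t + ∑ u ∈ Ico (t + 1) n, f u * p ^ u := by
    rw [← sum_range_add_sum_Ico _ ht, sum_range_succ,
      sum_eq_zero fun u hu => by rw [hlow u (mem_range.1 hu), zero_mul], zero_add]
  have hft : f t * p ^ t = -(c * p ^ n + ∑ u ∈ Ico (t + 1) n, f u * p ^ u) := by
    linear_combination h - hsplit
  refine (mul_dvd_mul_iff_right (pow_ne_zero t hp)).1 ?_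
  rw [← pow_succ', hft, dvd_neg]
  exact dvd_add (dvd_mul_of_dvd_right (pow_dvd_pow p ht) c)
    (dvd_sum fun u hu => dvd_mul_of_dvd_right (pow_dvd_pow p (mem_Ico.1 hu).1) _)

namespace Polynomial

variable {K : Type*} [Field K]

theorem isCoprime_prod_X_sub_C_of_disjoint {s t : Finset K} (h : Disjoint s t) :
    IsCoprime (∏ a ∈ s, (X - C a)) (∏ b ∈ t, (X - C b)) :=
  IsCoprime.prod_left fun _ ha => IsCoprime.prod_right fun _ hb =>
    isCoprime_X_sub_C_of_isUnit_sub
      (sub_ne_zero.2 fun hab => disjoint_left.1 h ha (by rwa [hab])).isUnit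

theorem eq_zero_of_mul_pow_add_sum_mul_pow_eq_zero {ι : Type*} [Fintype ι] {P c : ι → K[X]}
    {f : ℕ → K[X]} {n : ℕ} (hcop : Pairwise (IsCoprime on P)) (hP : ∀ i, P i ≠ 0)
    (hdeg : ∀ u < n, (f u).degree < (∏ i, P i).degree)
    (h : ∀ i, c i * P i ^ n + ∑ u ∈ range n, f u * P i ^ u = 0) : ∀ u < n, f u = 0 := by
  intro t
  induction t using Nat.strong_induction_on with
  | _ t ih =>
    intro ht
    have hdvd (i : ι) : P i ∣ f t :=
      dvd_of_mul_pow_add_sum_mul_pow_eq_zero (hP i) ht (fun u hu => ih u hu (hu.trans ht)) (h i)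
    exact eq_zero_of_dvd_of_degree_lt (Fintype.prod_dvd_of_coprime hcop hdvd) (hdeg t ht)

theorem degree_prod_prod_X_sub_C_of_card_eq {ι : Type*} [Fintype ι] {A : ι → Finset K} {d : ℕ}
    (hA : ∀ i, (A i).card = d) :
    (∏ i, ∏ ω ∈ A i, (X - C ω)).degree = ((Fintype.card ι * d : ℕ) : WithBot ℕ) := by
  rw [degree_eq_natDegree (monic_prod_of_monic _ _ fun i _ =>
      monic_prod_of_monic _ _ fun ω _ => monic_X_sub_C ω).ne_zero,
    natDegree_prod_of_monic _ _ fun i _ => monic_prod_of_monic _ _ fun ω _ => monic_X_sub_C ω]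
  simp [hA]

end Polynomial

theorem h_determined_by_g_general {B : Type*} [Field B]
    {m l k : ℕ} (hmk : m ∣ k)
    (A : Fin m → Finset B)
    (hdisj : ∀ j j' : Fin m, j ≠ j' → Disjoint (A j) (A j'))
    (hAcard : ∀ j : Fin m, (A j).card = k / m)
    (h h' : ℕ → Polynomial B)
    (hdeg : ∀ u, u < l → (h u).degree < (k : ℕ))
    (hdeg' : ∀ u, u < l → (h' u).degree < (k : ℕ))
    (hg : ∀ j : Fin m,
      h (l - m + (j : ℕ)) *
          (∏ ω ∈ A j, (Polynomial.X - Polynomial.C ω)) ^ (l - m) +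
        ∑ u ∈ Finset.range (l - m),
          h u * (∏ ω ∈ A j, (Polynomial.X - Polynomial.C ω)) ^ u =
      h' (l - m + (j : ℕ)) *
          (∏ ω ∈ A j, (Polynomial.X - Polynomial.C ω)) ^ (l - m) +
        ∑ u ∈ Finset.range (l - m),
          h' u * (∏ ω ∈ A j, (Polynomial.X - Polynomial.C ω)) ^ u) :
    ∀ u, u < l → h u = h' u := by
  set p : Fin m → B[X] := fun j => ∏ ω ∈ A j, (X - C ω)
  set f : ℕ → B[X] := fun u => h u - h' u
  have hp (j : Fin m) : p j ≠ 0 := (monic_prod_of_monic _ _ fun ω _ => monic_X_sub_C ω).ne_zero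
  have hf (j : Fin m) : f (l - m + j) * p j ^ (l - m) + ∑ u ∈ range (l - m), f u * p j ^ u = 0 := by
    simp only [f, sub_mul, sum_sub_distrib]
    linear_combination hg j
  have hdeg_prod : (∏ j, p j).degree = k := by
    rw [degree_prod_prod_X_sub_C_of_card_eq hAcard, Fintype.card_fin, Nat.mul_div_cancel' hmk]
  have hlow : ∀ u < l - m, f u = 0 :=
    eq_zero_of_mul_pow_add_sum_mul_pow_eq_zero
      (fun j j' hjj' => isCoprime_prod_X_sub_C_of_disjoint (hdisj j j' hjj')) hp
      (fun u hu => hdeg_prod ▸ (degree_sub_le _ _).trans_lt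
        (max_lt (hdeg u (by omega)) (hdeg' u (by omega)))) hf
  intro u hu
  rw [← sub_eq_zero]
  rcases lt_or_ge u (l - m) with hu' | hu'
  · exact hlow u hu'
  · obtain ⟨j, rfl⟩ : ∃ j : Fin m, l - m + j = u := ⟨⟨u - (l - m), by omega⟩, by simp; omega⟩
    have hj := hf j
    rw [sum_eq_zero fun v hv => by rw [hlow v (mem_range.1 hv), zero_mul], add_zero] at hj
    exact (mul_eq_zero.1 hj).resolve_right (pow_ne_zero _ (hp j))

/-- Uniqueness in the RS fractional-decoding construction: with `B` a field, `m ∣ k`,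
`m ≤ l`, pairwise disjoint sets `A j ⊆ B` of size `k/m` with annihilators
`p j = ∏_{ω ∈ A j} (x - ω)`, the polynomials `h 0, …, h (l-1)` of degree `< k` are
uniquely determined by the polynomials
`g j = h (l-m+j) * (p j)^(l-m) + ∑_{u=0}^{l-m-1} h u * (p j)^u`: if two families give
the same `g j` for all `j`, then they coincide. -/
theorem h_determined_by_g {B : Type*} [Field B]
    {m l k : ℕ} (hm : 0 < m) (hml : m ≤ l) (hmk : m ∣ k)
    (A : Fin m → Finset B)
    (hdisj : ∀ j j' : Fin m, j ≠ j' → Disjoint (A j) (A j'))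
    (hAcard : ∀ j : Fin m, (A j).card = k / m)
    (h h' : ℕ → Polynomial B)
    (hdeg : ∀ u, u < l → (h u).degree < (k : ℕ))
    (hdeg' : ∀ u, u < l → (h' u).degree < (k : ℕ))
    (hg : ∀ j : Fin m,
      h (l - m + (j : ℕ)) *
          (∏ ω ∈ A j, (Polynomial.X - Polynomial.C ω)) ^ (l - m) +
        ∑ u ∈ Finset.range (l - m),
          h u * (∏ ω ∈ A j, (Polynomial.X - Polynomial.C ω)) ^ u =
      h' (l - m + (j : ℕ)) *
          (∏ ω ∈ A j, (Polynomial.X - Polynomial.C ω)) ^ (l - m) +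
        ∑ u ∈ Finset.range (l - m),
          h' u * (∏ ω ∈ A j, (Polynomial.X - Polynomial.C ω)) ^ u) :
    ∀ u, u < l → h u = h' u :=
  h_determined_by_g_general hmk A hdisj hAcard h h' hdeg hdeg' hg
end

section
/- Let F be a finite field, C^s an (nl, kl) MDS code over F, α ∈ (0,1] with αl and k/α integers, k/α ≤ n. From the bundled array code C^(arr), reading the first αl scalar symbols of each of the n coordinates yields a code C^α ⊆ (F^{αl})^n that is an (n, k/α, αl) MDS array code; consequently C^(arr) can correct ⌊(n - k/α)/2⌋ column errors while downloading only αnl symbols of F. -/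
/-- Truncating the bundled array code: let `𝒞` be an `(n*l, k*l)` scalar MDS code over a
finite field `F` (scalar coordinates indexed by `Fin n × Fin l`), `a = α*l` an integer
with `0 < a ≤ l`, and `K = k/α` an integer (`a * K = k * l`) with `K ≤ n`.  Reading the
first `a` scalar symbols of each array coordinate yields an `(n, K, a)` MDS array code:
(i) any codeword is determined by any `K` truncated coordinates; consequently
(ii) there is a decoder correcting any `⌊(n - K)/2⌋` column errors while downloading
only `a*n = α*n*l` symbols of `F` (the first `a` symbols of each corrupted column). -/
theorem truncated_bundled_code_MDS_and_corrects
    {F : Type*} [Field F] [Fintype F] [DecidableEq F] {n k l a K : ℕ}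
    (ha : 0 < a) (hal : a ≤ l) (haK : a * K = k * l) (hKn : K ≤ n)
    (𝒞 : Finset (Fin n × Fin l → F))
    (hsize : 𝒞.card = Fintype.card F ^ (k * l))
    (hMDS : ∀ S : Finset (Fin n × Fin l), S.card = k * l →
      ∀ c ∈ 𝒞, ∀ c' ∈ 𝒞, (∀ p ∈ S, c p = c' p) → c = c') :
    (∀ T : Finset (Fin n), T.card = K →
      ∀ c ∈ 𝒞, ∀ c' ∈ 𝒞,
        (∀ i ∈ T, ∀ j : Fin a,
          c (i, ⟨(j : ℕ), lt_of_lt_of_le j.2 hal⟩) =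
            c' (i, ⟨(j : ℕ), lt_of_lt_of_le j.2 hal⟩)) → c = c') ∧
    ∃ g : (Fin n → Fin a → F) → (Fin n × Fin l → F),
      ∀ c ∈ 𝒞, ∀ E : Fin n → Fin l → F,
        (Finset.univ.filter fun i => E i ≠ 0).card ≤ (n - K) / 2 →
        g (fun i j =>
            c (i, ⟨(j : ℕ), lt_of_lt_of_le j.2 hal⟩) +
              E i ⟨(j : ℕ), lt_of_lt_of_le j.2 hal⟩) = c := by
  classical
  have hal' : ∀ j : Fin a, (j : ℕ) < l := fun j => lt_of_lt_of_le j.2 hal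
  have part1 : ∀ T : Finset (Fin n), T.card = K →
      ∀ c ∈ 𝒞, ∀ c' ∈ 𝒞,
        (∀ i ∈ T, ∀ j : Fin a,
          c (i, ⟨(j : ℕ), lt_of_lt_of_le j.2 hal⟩) =
            c' (i, ⟨(j : ℕ), lt_of_lt_of_le j.2 hal⟩)) → c = c' := by
    intro T hT c hc c' hc' hagree
    set J : Finset (Fin l) :=
      Finset.univ.image (fun j : Fin a => (⟨(j : ℕ), hal' j⟩ : Fin l)) with hJ
    have hJcard : J.card = a := by
      rw [hJ, Finset.card_image_of_injective]
      · simp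
      · intro x y hxy
        simpa [Fin.ext_iff] using hxy
    apply hMDS (T ×ˢ J)
    · rw [Finset.card_product, hT, hJcard, mul_comm]; exact haK
    · exact hc
    · exact hc'
    · intro p hp
      rw [Finset.mem_product] at hp
      obtain ⟨hp1, hp2⟩ := hp
      rw [hJ, Finset.mem_image] at hp2
      obtain ⟨j, _, hj⟩ := hp2
      have : p = (p.1, (⟨(j : ℕ), hal' j⟩ : Fin l)) := by
        rw [hj]
      rw [this]
      exact hagree p.1 hp1 j
  refine ⟨part1, ?_⟩
  set t := (n - K) / 2 with ht
  set tr : (Fin n × Fin l → F) → Fin n → Fin a → F :=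
    fun c i j => c (i, ⟨(j : ℕ), hal' j⟩) with htr
  set P : (Fin n → Fin a → F) → (Fin n × Fin l → F) → Prop :=
    fun r c => c ∈ 𝒞 ∧ (Finset.univ.filter fun i => tr c i ≠ r i).card ≤ t with hP
  refine ⟨fun r => if h : ∃ c, P r c then h.choose else fun _ => 0, ?_⟩
  intro c hc E hE
  set r : Fin n → Fin a → F := fun i j =>
    c (i, ⟨(j : ℕ), hal' j⟩) + E i ⟨(j : ℕ), hal' j⟩ with hr
  have hdist : (Finset.univ.filter fun i => tr c i ≠ r i).card ≤ t := by
    refine le_trans (Finset.card_le_card ?_) hE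
    intro i hi
    simp only [Finset.mem_filter, Finset.mem_univ, true_and] at hi ⊢
    intro h0
    apply hi
    funext j
    simp [htr, hr, h0]
  have hex : ∃ c', P r c' := ⟨c, hc, hdist⟩
  have hch := hex.choose_spec
  simp only [dif_pos hex]
  set c' := hex.choose with hc'def
  obtain ⟨hc'𝒞, hc'dist⟩ := hch
  set D := (Finset.univ.filter fun i => tr c' i ≠ tr c i) with hD
  have hDsub : D ⊆ (Finset.univ.filter fun i => tr c' i ≠ r i) ∪
      (Finset.univ.filter fun i => tr c i ≠ r i) := by
    intro i hi
    simp only [hD, Finset.mem_filter, Finset.mem_union, Finset.mem_univ, true_and] at hi ⊢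
    by_contra h
    push_neg at h
    exact hi (h.1.trans h.2.symm)
  have hDcard : D.card ≤ n - K := by
    calc D.card ≤ _ := Finset.card_le_card hDsub
      _ ≤ _ := Finset.card_union_le _ _
      _ ≤ t + t := add_le_add hc'dist hdist
      _ ≤ n - K := by omega
  have hA : K ≤ (Finset.univ \ D).card := by
    rw [Finset.card_sdiff_of_subset (Finset.subset_univ _)]
    simp only [Finset.card_univ, Fintype.card_fin]
    omega
  obtain ⟨T, hTsub, hT⟩ := Finset.exists_subset_card_eq hA
  apply part1 T hT c' hc'𝒞 c hc
  intro i hi j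
  have hiA := hTsub hi
  simp only [hD, Finset.mem_sdiff, Finset.mem_filter, Finset.mem_univ, true_and,
    not_not] at hiA
  exact congrFun hiA j
end

section
/- Let C be an (n,k,l) array code over finite field F of size |F|^{kl} that corrects t errors under list-of-L decoding by downloading an α-fraction (functions f_i : F^l → F^{α_i l} with Σα_i ≤ αn and list decoders g_1,...,g_L such that the transmitted codeword always appears in the output list for any error of weight ≤ t). Then for every I ⊆ {1,...,n} with |I| = n - t, |F|^{(Σ_{i∈I} α_i) l} · L ≥ |F|^{kl}. -/
/-- List-decoding counting bound: let `𝒞 ⊆ (F^l)^n` with `|𝒞| = |F|^(k*l)` be an array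
code correcting `t` errors under list-of-`L` decoding by fractional downloading, i.e.
there are functions `f i : F^l → F^(a i)` with `∑ i, a i / l ≤ α n` and list decoders
`g 1, …, g L` such that the transmitted codeword always appears in the output list for
any error of column-weight ≤ `t`.  Then for every `I ⊆ {1,…,n}` with `|I| = n - t`,
`|F|^(∑_{i ∈ I} a i) * L ≥ |F|^(k*l)`. -/
theorem fractional_list_decoding_counting_bound
    {F : Type*} [Field F] [Fintype F] [DecidableEq F]
    {n k l t L : ℕ} (hl : 0 < l) (ht : t ≤ n)
    (𝒞 : Finset (Fin n → Fin l → F))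
    (hcard : 𝒞.card = Fintype.card F ^ (k * l))
    (a : Fin n → ℕ) (α : ℚ) (hα : (∑ i : Fin n, (a i : ℚ) / l) ≤ α * n)
    (f : (i : Fin n) → (Fin l → F) → (Fin (a i) → F))
    (g : Fin L → ((i : Fin n) → Fin (a i) → F) → (Fin n → Fin l → F))
    (hdec : ∀ C ∈ 𝒞, ∀ E : Fin n → Fin l → F,
      (Finset.univ.filter fun i => E i ≠ 0).card ≤ t →
      ∃ j : Fin L, g j (fun i => f i (C i + E i)) = C)
    (I : Finset (Fin n)) (hI : I.card = n - t) :
    Fintype.card F ^ (k * l) ≤ Fintype.card F ^ (∑ i ∈ I, a i) * L := by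
  classical
  -- the "punctured" data sent to the decoder for a codeword C
  set D : (Fin n → Fin l → F) → ((i : Fin n) → Fin (a i) → F) :=
    fun C i => if i ∈ I then f i (C i) else f i 0 with hD
  have hmap : ∀ C ∈ 𝒞, ∃ j : Fin L, g j (D C) = C := by
    intro C hC
    have hwt : (Finset.univ.filter fun i =>
        (fun i => if i ∈ I then (0 : Fin l → F) else -C i) i ≠ 0).card ≤ t := by
      have hsub : (Finset.univ.filter fun i =>
            (fun i => if i ∈ I then (0 : Fin l → F) else -C i) i ≠ 0) ⊆ Iᶜ := by
        intro i hi
        simp only [Finset.mem_filter, ne_eq] at hi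
        rw [Finset.mem_compl]
        intro h
        simp [h] at hi
      have hle := Finset.card_le_card hsub
      rw [Finset.card_compl, Fintype.card_fin, hI] at hle
      omega
    obtain ⟨j, hj⟩ := hdec C hC (fun i => if i ∈ I then 0 else -C i) hwt
    refine ⟨j, ?_⟩
    have heq : (fun i => f i (C i + (if i ∈ I then 0 else -C i))) = D C := by
      funext i
      by_cases h : i ∈ I <;> simp [hD, h]
    rwa [heq] at hj
  -- injective map from 𝒞 into (data on I) × list index
  have hinj : ∃ Φ : 𝒞 → ((i : I) → Fin (a i.1) → F) × Fin L, Function.Injective Φ := by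
    refine ⟨fun C => (fun i => f i.1 (C.1 i.1), (hmap C.1 C.2).choose), ?_⟩
    intro C C' h
    have h1 := congrArg Prod.fst h
    have h2 := congrArg Prod.snd h
    simp only at h1 h2
    have hDeq : D C.1 = D C'.1 := by
      funext i
      by_cases hi : i ∈ I
      · have := congrFun h1 ⟨i, hi⟩
        simpa [hD, hi] using this
      · simp [hD, hi]
    have e1 := (hmap C.1 C.2).choose_spec
    have e2 := (hmap C'.1 C'.2).choose_spec
    have : C.1 = C'.1 := by
      rw [← e1, h2, hDeq]
      exact e2
    exact Subtype.ext this
  obtain ⟨Φ, hΦ⟩ := hinj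
  have hcardle := Fintype.card_le_of_injective Φ hΦ
  have hcard𝒞 : Fintype.card 𝒞 = Fintype.card F ^ (k * l) := by
    rw [Fintype.card_coe, hcard]
  rw [hcard𝒞, Fintype.card_prod, Fintype.card_fin, Fintype.card_pi] at hcardle
  calc Fintype.card F ^ (k * l)
      ≤ (∏ i : I, Fintype.card (Fin (a i.1) → F)) * L := hcardle
    _ = Fintype.card F ^ (∑ i ∈ I, a i) * L := by
        congr 1
        simp only [Fintype.card_fun, Fintype.card_fin]
        rw [← Finset.prod_pow_eq_pow_sum I a (Fintype.card F)]
        exact Finset.prod_coe_sort I (fun i => Fintype.card F ^ a i)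
end

section
/- For 0 < R ≤ α ≤ 1, the α-list decoding capacity ρ_α(R) is at most 1 - R/α: any sequence of (n, Rn) codes correcting ρn errors under polynomial-size list decoding while downloading an α-fraction must satisfy ρ ≤ 1 - R/α + o(1). -/
/-!
A decoder that sees only the downloads on a set `I` of `n - t` coordinates (the others may all be
in error) has at most `L · q ^ (∑ i ∈ I, aᵢ)` possible outputs, so `k l ≤ ∑ i ∈ I, aᵢ + log_q L`.
For the `n - t` cheapest coordinates, `∑ i ∈ I, aᵢ ≤ (n - t) / n · α n l`, and `log L = O(log n)`
is `o(n)`; hence `R n ≤ α (n - t) + o(n)`.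
-/

open Finset Real Filter

/-- Zeroing a codeword outside `I` is an error pattern of weight at most `t`, and the corrupted
word downloads `f i 0` outside `I`; so the codeword is read off a list index and the downloads
on `I`. -/
theorem card_le_mul_card_pow_sum_of_listDecodes {ι V F : Type*} [Fintype ι] [DecidableEq ι]
    [AddGroup V] [DecidableEq V] [Fintype F] {a : ι → ℕ} {t L : ℕ}
    (𝒞 : Finset (ι → V)) (f : (i : ι) → V → Fin (a i) → F)
    (g : Fin L → ((i : ι) → Fin (a i) → F) → ι → V)
    (hdec : ∀ C ∈ 𝒞, ∀ E : ι → V, #{i | E i ≠ 0} ≤ t →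
      ∃ j, g j (fun i => f i (C i + E i)) = C)
    {I : Finset ι} (hI : #Iᶜ ≤ t) :
    #𝒞 ≤ L * Fintype.card F ^ ∑ i ∈ I, a i := by
  classical
  let D : (i : ι) → Finset (Fin (a i) → F) := fun i => if i ∈ I then univ else {f i 0}
  have hsub : 𝒞 ⊆ (univ ×ˢ Fintype.piFinset D).image fun p => g p.1 p.2 := by
    intro C hC
    obtain ⟨j, hj⟩ := hdec C hC (fun i => if i ∈ I then 0 else -C i) <| by
      refine (card_le_card fun i => ?_).trans hI
      by_cases hi : i ∈ I <;> simp [hi]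
    refine mem_image.2 ⟨(j, _), mem_product.2 ⟨mem_univ _, Fintype.mem_piFinset.2 fun i => ?_⟩, hj⟩
    by_cases hi : i ∈ I <;> simp [D, hi]
  calc #𝒞 ≤ #(univ ×ˢ Fintype.piFinset D) := (card_le_card hsub).trans card_image_le
    _ = L * ∏ i ∈ I, Fintype.card F ^ a i := by
      simp [D, Fintype.card_piFinset, apply_ite card, prod_ite_mem]
    _ = L * Fintype.card F ^ ∑ i ∈ I, a i := by rw [prod_pow_eq_pow_sum]

section Selection

variable {ι M : Type*} [Fintype ι]

theorem exists_card_eq_forall_le_of_mem_of_notMem [LinearOrder M] (a : ι → M) {s : ℕ}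
    (hs : s ≤ Fintype.card ι) : ∃ I : Finset ι, #I = s ∧ ∀ i ∈ I, ∀ j ∉ I, a i ≤ a j := by
  classical
  induction s with
  | zero => exact ⟨∅, rfl, by simp⟩
  | succ s ih =>
    obtain ⟨I, hcard, hle⟩ := ih (Nat.le_of_succ_le hs)
    have hne : Iᶜ.Nonempty := by rw [← card_pos, card_compl]; omega
    obtain ⟨i, hi, hmin⟩ := exists_min_image Iᶜ a hne
    rw [mem_compl] at hi
    refine ⟨insert i I, by rw [card_insert_of_notMem hi, hcard], fun x hx y hy => ?_⟩
    rw [mem_insert, not_or] at hy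
    rcases mem_insert.1 hx with rfl | hx
    · exact hmin y (mem_compl.2 hy.2)
    · exact hle x hx y hy.2

theorem card_smul_sum_le_of_forall_le_of_mem_of_notMem [DecidableEq ι] [AddCommMonoid M]
    [PartialOrder M] [IsOrderedAddMonoid M] (a : ι → M) {I : Finset ι}
    (h : ∀ i ∈ I, ∀ j ∉ I, a i ≤ a j) :
    Fintype.card ι • ∑ i ∈ I, a i ≤ #I • ∑ i, a i := by
  have hcompl : #Iᶜ • ∑ i ∈ I, a i ≤ #I • ∑ j ∈ Iᶜ, a j :=
    calc #Iᶜ • ∑ i ∈ I, a i = ∑ j ∈ Iᶜ, ∑ i ∈ I, a i := sum_const _ |>.symm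
      _ ≤ ∑ j ∈ Iᶜ, ∑ _i ∈ I, a j :=
        sum_le_sum fun j hj => sum_le_sum fun i hi => h i hi j (mem_compl.1 hj)
      _ = #I • ∑ j ∈ Iᶜ, a j := by simp only [sum_const, smul_sum]
  calc Fintype.card ι • ∑ i ∈ I, a i = #I • ∑ i ∈ I, a i + #Iᶜ • ∑ i ∈ I, a i := by
        rw [← add_smul, card_add_card_compl]
    _ ≤ #I • ∑ i ∈ I, a i + #I • ∑ j ∈ Iᶜ, a j := by gcongr
    _ = #I • ∑ i, a i := by rw [← smul_add, sum_add_sum_compl]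

theorem exists_card_eq_card_smul_sum_le [AddCommMonoid M] [LinearOrder M] [IsOrderedAddMonoid M]
    (a : ι → M) {s : ℕ} (hs : s ≤ Fintype.card ι) :
    ∃ I : Finset ι, #I = s ∧ Fintype.card ι • ∑ i ∈ I, a i ≤ s • ∑ i, a i := by
  classical
  obtain ⟨I, rfl, h⟩ := exists_card_eq_forall_le_of_mem_of_notMem a hs
  exact ⟨I, rfl, card_smul_sum_le_of_forall_le_of_mem_of_notMem a h⟩

end Selection

theorem sub_le_logb_two_of_pow_le_mul_pow {q x y B : ℕ} (hq : 2 ≤ q) (h : q ^ x ≤ B * q ^ y) :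
    (x : ℝ) - y ≤ logb 2 B := by
  rcases le_or_gt x y with hxy | hxy
  · have : (x : ℝ) - y ≤ 0 := by rw [sub_nonpos]; exact_mod_cast hxy
    exact this.trans (div_nonneg (log_natCast_nonneg B) (log_nonneg one_le_two))
  have hB : (0 : ℝ) < B := by
    have : 0 < B * q ^ y := (pow_pos (by omega) x).trans_le h
    exact_mod_cast Nat.pos_of_mul_pos_right this
  have hlog : (x : ℝ) * log q ≤ log B + y * log q := by
    rw [← log_pow, ← log_pow, ← log_mul hB.ne' (by positivity)]
    exact log_le_log (by positivity) (by exact_mod_cast h)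
  have hxy' : (0 : ℝ) ≤ x - y := by rw [sub_nonneg]; exact_mod_cast hxy.le
  rw [logb, le_div_iff₀ (log_pos one_lt_two)]
  calc ((x : ℝ) - y) * log 2 ≤ (x - y) * log q :=
        mul_le_mul_of_nonneg_left (log_le_log two_pos (by exact_mod_cast hq)) hxy'
    _ ≤ log B := by linarith

theorem logb_natCast_le_logb_natCast {b : ℝ} (hb : 1 < b) {m n : ℕ} (h : m ≤ n) :
    logb b m ≤ logb b n := by
  rcases m.eq_zero_or_pos with rfl | hm
  · simpa [logb] using div_nonneg (log_natCast_nonneg n) (log_nonneg hb.le)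
  · exact logb_le_logb_of_le hb (by positivity) (by exact_mod_cast h)

theorem sub_logb_mul_card_le_of_listDecodes {ι V F : Type*} [Fintype ι] [DecidableEq ι]
    [AddGroup V] [DecidableEq V] [Fintype F] [Nontrivial F] {a : ι → ℕ} {K t L : ℕ}
    (𝒞 : Finset (ι → V)) (f : (i : ι) → V → Fin (a i) → F)
    (g : Fin L → ((i : ι) → Fin (a i) → F) → ι → V)
    (hdec : ∀ C ∈ 𝒞, ∀ E : ι → V, #{i | E i ≠ 0} ≤ t →
      ∃ j, g j (fun i => f i (C i + E i)) = C)
    (h𝒞 : #𝒞 = Fintype.card F ^ K) (ht : t ≤ Fintype.card ι) :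
    ((K : ℝ) - logb 2 L) * Fintype.card ι ≤ (Fintype.card ι - t) * ∑ i, (a i : ℝ) := by
  -- Trust the `card ι - t` cheapest coordinates.
  obtain ⟨I, hI, hIsum⟩ := exists_card_eq_card_smul_sum_le a (Nat.sub_le _ t)
  have hcount := h𝒞 ▸ card_le_mul_card_pow_sum_of_listDecodes 𝒞 f g hdec
    (by rw [card_compl, hI]; omega)
  have hK := sub_le_logb_two_of_pow_le_mul_pow Fintype.one_lt_card hcount
  have hIsum' := (Nat.cast_le (α := ℝ)).2 hIsum
  push_cast [smul_eq_mul, Nat.cast_sub ht] at hIsum' hK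
  calc ((K : ℝ) - logb 2 L) * Fintype.card ι ≤ (∑ i ∈ I, (a i : ℝ)) * Fintype.card ι := by
        gcongr; linarith
    _ ≤ (Fintype.card ι - t) * ∑ i, (a i : ℝ) := by linarith

theorem eventually_mul_logb_le (m : ℝ) {b c : ℝ} (hc : 0 < c) :
    ∀ᶠ n : ℕ in atTop, m * logb b n ≤ c * n := by
  filter_upwards [((isLittleO_log_id_atTop.const_mul_left (m / log b)).comp_tendsto
    tendsto_natCast_atTop_atTop).bound hc] with n hn
  simpa [logb, abs_of_nonneg, div_mul_eq_mul_div, mul_div_assoc] using (le_abs_self _).trans hn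

theorem alpha_list_decoding_capacity_upper_bound_general
    (m : ℕ) (R α ε : ℝ) (hR : 0 < R) (hRα : R ≤ α) (hε : 0 < ε) :
    ∃ N : ℕ, ∀ n : ℕ, N ≤ n →
      ∀ (F : Type) [Field F] [Fintype F] [DecidableEq F],
      ∀ (k l t L : ℕ), 0 < l → t ≤ n → L ≤ n ^ m → R * n ≤ (k : ℝ) →
      ∀ 𝒞 : Finset (Fin n → Fin l → F), 𝒞.card = Fintype.card F ^ (k * l) →
      ∀ a : Fin n → ℕ, (∑ i : Fin n, (a i : ℝ)) ≤ α * n * l →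
      ∀ (f : (i : Fin n) → (Fin l → F) → (Fin (a i) → F))
        (g : Fin L → ((i : Fin n) → Fin (a i) → F) → (Fin n → Fin l → F)),
      (∀ C ∈ 𝒞, ∀ E : Fin n → Fin l → F,
        (Finset.univ.filter fun i => E i ≠ 0).card ≤ t →
        ∃ j : Fin L, g j (fun i => f i (C i + E i)) = C) →
      (t : ℝ) ≤ (1 - R / α + ε) * n := by
  have hα : 0 < α := hR.trans_le hRα
  obtain ⟨N, hN⟩ := eventually_atTop.1 <|
    (eventually_mul_logb_le m (b := 2) (by positivity : 0 < ε * α)).and (eventually_ge_atTop 1)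
  refine ⟨N, fun n hn F _ _ _ k l t L hl ht hL hk 𝒞 h𝒞 a ha f g hdec => ?_⟩
  obtain ⟨hlogb, hn⟩ := hN n hn
  have hbound := sub_logb_mul_card_le_of_listDecodes 𝒞 f g hdec h𝒞 (by simpa using ht)
  have hL : logb 2 L ≤ ε * α * n := by
    refine (logb_natCast_le_logb_natCast one_lt_two hL).trans ?_
    rwa [Nat.cast_pow, logb_pow]
  have hn : (0 : ℝ) < n := by exact_mod_cast hn
  have ht : (0 : ℝ) ≤ n - t := by simpa using ht
  have hl : (1 : ℝ) ≤ l := by exact_mod_cast hl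
  simp only [Fintype.card_fin, Nat.cast_mul] at hbound
  have hkl : (k : ℝ) * l - ε * α * n ≤ α * (n - t) * l := by
    refine le_of_mul_le_mul_right ?_ hn
    calc ((k : ℝ) * l - ε * α * n) * n ≤ (k * l - logb 2 L) * n := by gcongr
      _ ≤ (n - t) * (α * n * l) := hbound.trans (by gcongr)
      _ = α * (n - t) * l * n := by ring
  have hRn : R * n ≤ α * (n - t) + ε * α * n := by
    refine le_of_mul_le_mul_right ?_ (zero_lt_one.trans_le hl)
    linarith [mul_le_mul_of_nonneg_right hk (by positivity : (0 : ℝ) ≤ l),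
      le_mul_of_one_le_right (by positivity : (0 : ℝ) ≤ ε * α * n) hl]
  have hRα : R / α * n ≤ n - t + ε * n := by
    rw [div_mul_eq_mul_div, div_le_iff₀ hα]
    linarith
  linarith

/-- The α-list decoding capacity is at most `1 - R/α`: for every list-size exponent `m`,
rate `R`, download fraction `α` with `0 < R ≤ α ≤ 1`, and every `ε > 0`, there is `N`
such that for all `n ≥ N`, any `(n, k, l)` array code over any finite field `F` with
`k ≥ R n`, correcting `t` errors under list-of-`L` decoding with polynomial list size
`L ≤ n^m` while downloading at most an `α`-fraction (`∑ i, a i ≤ α n l` downloaded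
symbols) of the codeword, must satisfy `t ≤ (1 - R/α + ε) n`; i.e. the normalized
radius is at most `1 - R/α + o(1)`. -/
theorem alpha_list_decoding_capacity_upper_bound
    (m : ℕ) (R α ε : ℝ) (hR : 0 < R) (hRα : R ≤ α) (hα : α ≤ 1) (hε : 0 < ε) :
    ∃ N : ℕ, ∀ n : ℕ, N ≤ n →
      ∀ (F : Type) [Field F] [Fintype F] [DecidableEq F],
      ∀ (k l t L : ℕ), 0 < l → t ≤ n → L ≤ n ^ m → R * n ≤ (k : ℝ) →
      ∀ 𝒞 : Finset (Fin n → Fin l → F), 𝒞.card = Fintype.card F ^ (k * l) →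
      ∀ a : Fin n → ℕ, (∑ i : Fin n, (a i : ℝ)) ≤ α * n * l →
      ∀ (f : (i : Fin n) → (Fin l → F) → (Fin (a i) → F))
        (g : Fin L → ((i : Fin n) → Fin (a i) → F) → (Fin n → Fin l → F)),
      (∀ C ∈ 𝒞, ∀ E : Fin n → Fin l → F,
        (Finset.univ.filter fun i => E i ≠ 0).card ≤ t →
        ∃ j : Fin L, g j (fun i => f i (C i + E i)) = C) →
      (t : ℝ) ≤ (1 - R / α + ε) * n :=
  alpha_list_decoding_capacity_upper_bound_general m R α ε hR hRα hε
end
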